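/- arXiv:2201.13451 — 8 statements merged into one kernel-verified Lean document; each statement's English description precedes it below -/
import Mathlib

section
/- Let (A₁, X₂, A₂, Y) be random variables with covariance matrix Σ = [[1, ρ_AX, ρ_AX ρ_XA, 0], [ρ_AX, 1, ρ_XA, ρ_UX], [ρ_AX ρ_XA, ρ_XA, 1, ρ_XA ρ_UX], [0, ρ_UX, ρ_XA ρ_UX, 1]] (in the order A₁, X₂, A₂, Y), where Σ is positive definite and |ρ_AX| < 1. Then the population least-squares regression coefficients of Y on (A₁, X₂, A₂), i.e. the minimizer β of E(Y − β₁A₁ − β₂X₂ − β₃A₂)², satisfies β = Σ_{(A₁,X₂,A₂)}⁻¹ Cov((A₁,X₂,A₂), Y) = (−ρ_AX ρ_UX/(1−ρ_AX²), ρ_UX/(1−ρ_AX²), 0). -/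
open Matrix

/-!
The covariance vector of `Y` with `(A₁, X₂, A₂)` is `ρUX • (0, 1, ρXA)`, and the covariance
matrix of `(A₁, X₂, A₂)` maps `(-ρAX, 1, 0)` to `(1 - ρAX²) • (0, 1, ρXA)`. Since that matrix is a
principal submatrix of the positive definite `Σ`, it is invertible, so the regression coefficient
is `ρUX / (1 - ρAX²) • (-ρAX, 1, 0)`.
-/

lemma mulVec_neg_one_zero_eq_smul (a b : ℝ) :
    !![1, a, a * b; a, 1, b; a * b, b, 1] *ᵥ ![-a, 1, 0] = (1 - a ^ 2) • ![0, 1, b] := by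
  ext i
  fin_cases i <;> simp [mulVec, dotProduct, Fin.sum_univ_three] <;> ring

/-- In the two-period Gaussian linear example with covariance matrix Σ
(order A₁, X₂, A₂, Y) parameterized by ρ_AX, ρ_XA, ρ_UX, the population regression
coefficient vector of Y on (A₁, X₂, A₂), namely Σ_Z⁻¹ Cov(Z, Y), equals
(−ρ_AX ρ_UX/(1−ρ_AX²), ρ_UX/(1−ρ_AX²), 0). -/
theorem stmt0 (ρAX ρXA ρUX : ℝ)
    (Sig : Matrix (Fin 4) (Fin 4) ℝ)
    (hSig : Sig = !![1, ρAX, ρAX * ρXA, 0;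
                 ρAX, 1, ρXA, ρUX;
                 ρAX * ρXA, ρXA, 1, ρXA * ρUX;
                 0, ρUX, ρXA * ρUX, 1])
    (hpd : Sig.PosDef)
    (hρ : |ρAX| < 1)
    (SigZ : Matrix (Fin 3) (Fin 3) ℝ)
    (hSigZ : SigZ = Sig.submatrix Fin.castSucc Fin.castSucc)
    (c : Fin 3 → ℝ)
    (hc : c = fun i => Sig (Fin.castSucc i) 3) :
    SigZ⁻¹ *ᵥ c = ![-(ρAX * ρUX) / (1 - ρAX ^ 2), ρUX / (1 - ρAX ^ 2), 0] := by
  have hdenom : 1 - ρAX ^ 2 ≠ 0 := by nlinarith [sq_abs ρAX, abs_nonneg ρAX]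
  have hpdZ : SigZ.PosDef := hSigZ ▸ hpd.submatrix (Fin.castSucc_injective 3)
  let _ : Invertible SigZ := hpdZ.isUnit.invertible
  have hSigZ_eq : SigZ = !![1, ρAX, ρAX * ρXA; ρAX, 1, ρXA; ρAX * ρXA, ρXA, 1] := by
    subst hSig hSigZ
    ext i j
    fin_cases i <;> fin_cases j <;> rfl
  have hc_eq : c = ρUX • ![0, 1, ρXA] := by
    subst hc hSig
    ext i
    fin_cases i <;> simp [mul_comm]
  have hcoef : ![-(ρAX * ρUX) / (1 - ρAX ^ 2), ρUX / (1 - ρAX ^ 2), 0] =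
      (ρUX / (1 - ρAX ^ 2)) • ![-ρAX, 1, 0] := by
    ext i
    fin_cases i <;> simp [neg_div, mul_div_assoc, mul_comm]
  refine inv_mulVec_eq_vec ?_
  rw [hcoef, mulVec_smul, hSigZ_eq, mulVec_neg_one_zero_eq_smul, smul_smul,
    div_mul_cancel₀ _ hdenom, hc_eq]
end

section
/- In the linear regression example, the coefficient on A₁ from the naive regression of Y on (A₁, X₂, A₂) equals −ρ_AX ρ_UX/(1 − ρ_AX²), which is nonzero whenever ρ_AX ≠ 0 and ρ_UX ≠ 0, even though Cov(A₁, Y) = 0. -/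
open Matrix

/-!
Subtracting `ρ_AX` times the first column of `Σ_{(A₁,X₂,A₂)}` from the second leaves
`(1 - ρ_AX²) • (0, 1, ρ_XA)`, while `Cov((A₁,X₂,A₂), Y) = ρ_UX • (0, 1, ρ_XA)`. Hence the
regression coefficients are `ρ_UX / (1 - ρ_AX²) • (-ρ_AX, 1, 0)`; positive definiteness of `Σ`
makes `Σ_{(A₁,X₂,A₂)}` invertible and `1 - ρ_AX²` positive.
-/

theorem Matrix.PosDef.sq_lt_mul_diag {n : Type*} [Fintype n] [DecidableEq n]
    {A : Matrix n n ℝ} (hA : A.PosDef) {i j : n} (hij : i ≠ j) :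
    A i j ^ 2 < A i i * A j j := by
  have hinj : Function.Injective ![i, j] := by
    intro k l hkl
    fin_cases k <;> fin_cases l <;> simp_all [eq_comm]
  have hdet := (hA.submatrix hinj).det_pos
  have hsymm : A j i = A i j := hA.isHermitian.apply i j
  rw [det_fin_two] at hdet
  simp only [submatrix_apply, cons_val_zero, cons_val_one, hsymm] at hdet
  linarith

theorem covariance_mulVec_regressionCoef (a b u : ℝ) (ha : 1 - a ^ 2 ≠ 0) :
    !![1, a, a * b; a, 1, b; a * b, b, 1] *ᵥ ![-(a * u) / (1 - a ^ 2), u / (1 - a ^ 2), 0] =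
      ![0, u, b * u] := by
  ext i
  fin_cases i <;> simp [mulVec, dotProduct, Fin.sum_univ_three] <;> field_simp <;> ring

theorem stmt1_general (ρAX ρXA ρUX : ℝ)
    (Sig : Matrix (Fin 4) (Fin 4) ℝ)
    (hSig : Sig = !![1, ρAX, ρAX * ρXA, 0;
                 ρAX, 1, ρXA, ρUX;
                 ρAX * ρXA, ρXA, 1, ρXA * ρUX;
                 0, ρUX, ρXA * ρUX, 1])
    (hpd : Sig.PosDef)
    (SigZ : Matrix (Fin 3) (Fin 3) ℝ)
    (hSigZ : SigZ = Sig.submatrix Fin.castSucc Fin.castSucc)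
    (c : Fin 3 → ℝ)
    (hc : c = fun i => Sig (Fin.castSucc i) 3) :
    (SigZ⁻¹ *ᵥ c) 0 = -(ρAX * ρUX) / (1 - ρAX ^ 2) ∧
    (ρAX ≠ 0 → ρUX ≠ 0 → (SigZ⁻¹ *ᵥ c) 0 ≠ 0) ∧
    Sig 0 3 = 0 := by
  have hSigZ' : SigZ = !![1, ρAX, ρAX * ρXA; ρAX, 1, ρXA; ρAX * ρXA, ρXA, 1] := by
    subst hSigZ hSig
    ext i j
    fin_cases i <;> fin_cases j <;> rfl
  have hc' : c = ![0, ρUX, ρXA * ρUX] := by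
    subst hc hSig
    ext i
    fin_cases i <;> rfl
  have hAX : 0 < 1 - ρAX ^ 2 := by
    have := hpd.sq_lt_mul_diag (i := 0) (j := 1) (by decide)
    simp only [hSig, of_apply, cons_val', cons_val_zero, cons_val_one, empty_val',
      cons_val_fin_one, mul_one] at this
    linarith
  have : Invertible SigZ := (hSigZ ▸ hpd.submatrix (Fin.castSucc_injective 3)).isUnit.invertible
  have hcoef : SigZ⁻¹ *ᵥ c = ![-(ρAX * ρUX) / (1 - ρAX ^ 2), ρUX / (1 - ρAX ^ 2), 0] :=
    inv_mulVec_eq_vec (by rw [hSigZ', hc', covariance_mulVec_regressionCoef _ _ _ hAX.ne'])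
  refine ⟨by simp [hcoef], fun hAX0 hUX0 => ?_, by simp [hSig]⟩
  simp only [hcoef, cons_val_zero]
  exact div_ne_zero (neg_ne_zero.mpr (mul_ne_zero hAX0 hUX0)) hAX.ne'

/-- The naive regression coefficient on A₁ (the first component of
Σ_Z⁻¹ Cov(Z,Y)) equals −ρ_AX ρ_UX/(1−ρ_AX²), is nonzero whenever ρ_AX ≠ 0 and
ρ_UX ≠ 0, even though Cov(A₁, Y) = 0. -/
theorem stmt1 (ρAX ρXA ρUX : ℝ)
    (Sig : Matrix (Fin 4) (Fin 4) ℝ)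
    (hSig : Sig = !![1, ρAX, ρAX * ρXA, 0;
                 ρAX, 1, ρXA, ρUX;
                 ρAX * ρXA, ρXA, 1, ρXA * ρUX;
                 0, ρUX, ρXA * ρUX, 1])
    (hpd : Sig.PosDef)
    (hρ : |ρAX| < 1)
    (SigZ : Matrix (Fin 3) (Fin 3) ℝ)
    (hSigZ : SigZ = Sig.submatrix Fin.castSucc Fin.castSucc)
    (c : Fin 3 → ℝ)
    (hc : c = fun i => Sig (Fin.castSucc i) 3) :
    (SigZ⁻¹ *ᵥ c) 0 = -(ρAX * ρUX) / (1 - ρAX ^ 2) ∧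
    (ρAX ≠ 0 → ρUX ≠ 0 → (SigZ⁻¹ *ᵥ c) 0 ≠ 0) ∧
    Sig 0 3 = 0 :=
  stmt1_general ρAX ρXA ρUX Sig hSig hpd SigZ hSigZ c hc
end

section
/- Combining the previous two results: in the two-period Gaussian linear model with E[X₂|A₁=a₁] = c·a₁ where c = Cov(A₁,X₂)/Var(A₁), the orthogonalized regression coefficients (β₁ᵒ, β₂ᵒ) from minimizing E(Y − β₁A₁ − λX̃₂ − β₂A₂)² over (β₁, λ, β₂) equal the causal parameters (θ₁, θ₂) of the g-formula: ψ(a₁,a₂) = θ₁a₁ + θ₂a₂. -/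
open MeasureTheory

/-- Population covariance of two real random variables. -/
noncomputable def cov {Ω : Type*} [MeasurableSpace Ω] (μ : Measure Ω) (f g : Ω → ℝ) : ℝ :=
  (∫ ω, f ω * g ω ∂μ) - (∫ ω, f ω ∂μ) * (∫ ω, g ω ∂μ)

/-! Since `β₁ A₁ + λ (X₂ - c A₁) = (β₁ - λ c) A₁ + λ X₂`, the orthogonalized least-squares
objective is the naive one after the invertible change of coordinates
`(β₁, λ, β₂) ↦ (β₁ - λ c, λ, β₂)`. Hence the unique naive minimizer is the image of the
orthogonalized one: `β₁ⁿ = β₁ᵒ - λᵒ c`, `λ₂ⁿ = λᵒ`, `β₂ⁿ = β₂ᵒ`. Averaging the linear conditional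
mean over the law of `X₂` given `A₁ = a₁`, whose mean is `c a₁`, gives
`ψ(a₁, a₂) = β₁ⁿ a₁ + λ₂ⁿ c a₁ + β₂ⁿ a₂ = β₁ᵒ a₁ + β₂ᵒ a₂`. -/

def shearEquiv (c : ℝ) : ℝ × ℝ × ℝ ≃ ℝ × ℝ × ℝ where
  toFun p := (p.1 - p.2.1 * c, p.2.1, p.2.2)
  invFun p := (p.1 + p.2.1 * c, p.2.1, p.2.2)
  left_inv p := by simp
  right_inv p := by simp

theorem Equiv.apply_eq_of_isMin_comp {α β γ : Type*} [Preorder γ] (e : α ≃ β) {f : β → γ}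
    {x : α} {y : β} (hx : ∀ z, f (e x) ≤ f (e z))
    (huniq : ∀ z, (∀ w, f z ≤ f w) → z = y) : e x = y :=
  huniq _ fun w => by simpa using hx (e.symm w)

theorem integral_add_mul_id {ν : Measure ℝ} [IsProbabilityMeasure ν]
    (h : Integrable (fun x : ℝ => x) ν) (a b : ℝ) :
    ∫ x, (a + b * x) ∂ν = a + b * ∫ x, x ∂ν := by
  rw [integral_add (integrable_const a) (h.const_mul b), integral_const, integral_const_mul]
  simp

theorem stmt5_general {Ω : Type*} [MeasurableSpace Ω] (μ : Measure Ω)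
    (A1 X2 A2 Y : Ω → ℝ)
    (c : ℝ)
    (Fn Fo : ℝ × ℝ × ℝ → ℝ)
    (hFn : Fn = fun p => ∫ ω, (Y ω - p.1 * A1 ω - p.2.1 * X2 ω - p.2.2 * A2 ω) ^ 2 ∂μ)
    (hFo : Fo = fun p =>
      ∫ ω, (Y ω - p.1 * A1 ω - p.2.1 * (X2 ω - c * A1 ω) - p.2.2 * A2 ω) ^ 2 ∂μ)
    (pn po : ℝ × ℝ × ℝ)
    (huniqn : ∀ q, (∀ r, Fn q ≤ Fn r) → q = pn)
    (hmino : ∀ q, Fo po ≤ Fo q)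
    -- conditional law of X₂ given A₁ = a₁, with linear conditional mean c·a₁
    (ν : ℝ → Measure ℝ) [∀ a, IsProbabilityMeasure (ν a)]
    (hint : ∀ a, Integrable (fun x : ℝ => x) (ν a))
    (hmean : ∀ a, ∫ x, x ∂ν a = c * a)
    -- g-formula with the (naive) conditional-mean coefficients of Y
    (ψ : ℝ → ℝ → ℝ)
    (hψ : ψ = fun a1 a2 => ∫ x, (pn.1 * a1 + pn.2.1 * x + pn.2.2 * a2) ∂ν a1) :
    ∀ a1 a2, ψ a1 a2 = po.1 * a1 + po.2.2 * a2 := by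
  have hFo_eq : Fo = Fn ∘ shearEquiv c := by
    subst hFo hFn
    funext p
    simp only [Function.comp_apply, shearEquiv, Equiv.coe_fn_mk]
    congr 1 with ω
    ring
  have hpn : shearEquiv c po = pn :=
    (shearEquiv c).apply_eq_of_isMin_comp (by simpa [hFo_eq] using hmino) huniqn
  intro a1 a2
  subst hψ pn
  simp only [shearEquiv, Equiv.coe_fn_mk, add_right_comm _ _ (po.2.2 * a2)]
  rw [integral_add_mul_id (hint a1), hmean]
  ring

/-- In the two-period setting with conditional mean E[X₂|A₁=a₁] = c·a₁,
where c = Cov(A₁,X₂)/Var(A₁), the orthogonalized-regression coefficients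
(β₁ᵒ, β₂ᵒ) = (po.1, po.2.2) (minimizing E(Y − β₁A₁ − λX̃₂ − β₂A₂)²) equal the causal
parameters of the g-formula: ψ(a₁,a₂) = β₁ᵒ a₁ + β₂ᵒ a₂, where
ψ(a₁,a₂) = ∫ (β₁ⁿa₁ + λ₂ⁿx + β₂ⁿa₂) dν(a₁)(x) with (β₁ⁿ,λ₂ⁿ,β₂ⁿ) the naive
least-squares coefficients (= coefficients of the linear conditional mean of Y). -/
theorem stmt5 {Ω : Type*} [MeasurableSpace Ω] (μ : Measure Ω) [IsProbabilityMeasure μ]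
    (A1 X2 A2 Y : Ω → ℝ)
    (hA1 : MemLp A1 2 μ) (hX2 : MemLp X2 2 μ) (hA2 : MemLp A2 2 μ) (hY : MemLp Y 2 μ)
    (hvar : 0 < cov μ A1 A1)
    (c : ℝ) (hc : c = cov μ A1 X2 / cov μ A1 A1)
    (Fn Fo : ℝ × ℝ × ℝ → ℝ)
    (hFn : Fn = fun p => ∫ ω, (Y ω - p.1 * A1 ω - p.2.1 * X2 ω - p.2.2 * A2 ω) ^ 2 ∂μ)
    (hFo : Fo = fun p =>
      ∫ ω, (Y ω - p.1 * A1 ω - p.2.1 * (X2 ω - c * A1 ω) - p.2.2 * A2 ω) ^ 2 ∂μ)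
    (pn po : ℝ × ℝ × ℝ)
    (hminn : ∀ q, Fn pn ≤ Fn q) (huniqn : ∀ q, (∀ r, Fn q ≤ Fn r) → q = pn)
    (hmino : ∀ q, Fo po ≤ Fo q) (huniqo : ∀ q, (∀ r, Fo q ≤ Fo r) → q = po)
    -- conditional law of X₂ given A₁ = a₁, with linear conditional mean c·a₁
    (ν : ℝ → Measure ℝ) [∀ a, IsProbabilityMeasure (ν a)]
    (hint : ∀ a, Integrable (fun x : ℝ => x) (ν a))
    (hmean : ∀ a, ∫ x, x ∂ν a = c * a)
    -- g-formula with the (naive) conditional-mean coefficients of Y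
    (ψ : ℝ → ℝ → ℝ)
    (hψ : ψ = fun a1 a2 => ∫ x, (pn.1 * a1 + pn.2.1 * x + pn.2.2 * a2) ∂ν a1) :
    ∀ a1 a2, ψ a1 a2 = po.1 * a1 + po.2.2 * a2 :=
  stmt5_general μ A1 X2 A2 Y c Fn Fo hFn hFo pn po huniqn hmino ν hint hmean ψ hψ
end

section
/- (Log-linear orthogonalized marginalization) Suppose Xₜ = gₜ(āₜ₋₁, X̄ₜ₋₁) + εₜ with (εₜ) independent random variables independent of the past, and E[Y | X̃, Ā] = exp(α + βᵀĀ + λᵀX̃) where X̃ₜ = Xₜ − gₜ(Āₜ₋₁, X̄ₜ₋₁). If E[exp(λₜεₜ)] < ∞ for all t, then the g-formula gives ψ(ā) = exp(α′ + βᵀā) where α′ = α + Σₜ log E[exp(λₜεₜ)]. In particular the causal effect is log-linear with slope β. -/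
open MeasureTheory ProbabilityTheory Real

/- Under the location model the g-formula is an integral against the product law of the
independent residuals, and the integrand `exp (c + ∑ λₜ xₜ)` factorizes coordinatewise,
so the integral is `exp c` times the product of the moment generating functions. Each of these
is positive because `exp (λₜ εₜ)` is integrable, so it equals `exp (log E[exp (λₜ εₜ)])`. -/

theorem integral_exp_add_sum_mul_pi {ι : Type*} [Fintype ι] (ν : ι → Measure ℝ)
    [∀ i, SigmaFinite (ν i)] (c : ℝ) (lam : ι → ℝ) :
    ∫ x, exp (c + ∑ i, lam i * x i) ∂Measure.pi ν = exp c * ∏ i, mgf id (ν i) (lam i) := by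
  simp_rw [exp_add, exp_sum, integral_const_mul]
  exact congrArg _ (integral_fintype_prod_eq_prod (fun i z => exp (lam i * z)))

theorem exp_add_sum_cgf {ι : Type*} [Fintype ι] (ν : ι → Measure ℝ) [∀ i, NeZero (ν i)]
    (c : ℝ) (lam : ι → ℝ) (hmgf : ∀ i, Integrable (fun z => exp (lam i * z)) (ν i)) :
    exp (c + ∑ i, cgf id (ν i) (lam i)) = exp c * ∏ i, mgf id (ν i) (lam i) := by
  rw [exp_add, exp_sum]
  exact congrArg _ (Finset.prod_congr rfl fun i _ => exp_cgf (hmgf i))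

/-- log-linear orthogonalized marginalization: under the location model
the g-formula reduces to an integral over the product law of the independent
residuals εₜ ~ νₜ; if E[exp(λₜεₜ)] < ∞ for all t then
ψ(ā) = exp(α′ + βᵀā) with α′ = α + Σₜ log E[exp(λₜεₜ)]. -/
theorem stmt7 {T : ℕ} (α : ℝ) (β lam : Fin T → ℝ)
    (ν : Fin T → Measure ℝ) [∀ t, IsProbabilityMeasure (ν t)]
    (hmgf : ∀ t, Integrable (fun z => Real.exp (lam t * z)) (ν t))
    (ψ : (Fin T → ℝ) → ℝ)
    (hψ : ψ = fun a =>
      ∫ x, Real.exp (α + ∑ t, β t * a t + ∑ t, lam t * x t) ∂Measure.pi ν)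
    (α' : ℝ)
    (hα' : α' = α + ∑ t, Real.log (∫ z, Real.exp (lam t * z) ∂ν t)) :
    ∀ a, ψ a = Real.exp (α' + ∑ t, β t * a t) := by
  intro a
  subst hψ hα'
  calc ∫ x, exp (α + ∑ t, β t * a t + ∑ t, lam t * x t) ∂Measure.pi ν
      = exp (α + ∑ t, β t * a t) * ∏ t, mgf id (ν t) (lam t) :=
        integral_exp_add_sum_mul_pi ν _ lam
    -- `cgf id (ν t) (lam t)` unfolds to `log ∫ z, exp (lam t * z) ∂ν t`
    _ = exp (α + ∑ t, cgf id (ν t) (lam t) + ∑ t, β t * a t) := by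
        rw [add_right_comm, exp_add_sum_cgf ν _ lam hmgf]
end

section
/- (Probit-Gaussian orthogonalized marginalization) Suppose Xₜ = gₜ(āₜ₋₁, X̄ₜ₋₁) + εₜ with εₜ ~ N(0, σₜ²) independent, and P(Y = 1 | Ā, X̃) = Φ(α + βᵀĀ + λᵀX̃), where X̃ₜ = Xₜ − gₜ. Then the g-formula ψ(ā) = ∫⋯∫ Φ(α + βᵀā + Σₜ λₜ(xₜ − gₜ)) Πₜ p(xₜ | x̄ₜ₋₁, āₜ₋₁) dx₁⋯dx_T equals Φ((α + βᵀā)/√(1 + σ²)) with σ² = Σₜ λₜ² σₜ². Hence ψ follows a probit model with coefficients θ = β/√(1 + σ²). -/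
/-!
If `Y ~ N(0, 1)` is independent of `Z ~ N(m, w)`, then `Φ(c + z) = P(Y ≤ c + z)`, so averaging
over `Z` gives `P(Y - Z ≤ c)`, and `Y - Z ~ N(-m, 1 + w)`. The residual term `∑ₜ λₜ εₜ` of the
g-formula is such a `Z`: a weighted sum of independent Gaussians is Gaussian with variance
`∑ₜ λₜ² σₜ²`, because characteristic functions of independent sums multiply.
-/

open MeasureTheory ProbabilityTheory
open scoped NNReal

/-- The standard normal CDF Φ. -/
noncomputable def stdNormalCDF (x : ℝ) : ℝ := ((gaussianReal 0 1) (Set.Iic x)).toReal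

lemma stdNormalCDF_eq_cdf : stdNormalCDF = cdf (gaussianReal 0 1) := by
  ext x
  rw [cdf_eq_real, measureReal_def, stdNormalCDF]

lemma measurable_stdNormalCDF : Measurable stdNormalCDF := by
  rw [stdNormalCDF_eq_cdf]
  exact (cdf _).mono.measurable

lemma cdf_gaussianReal {m : ℝ} {v : ℝ≥0} (hv : v ≠ 0) (x : ℝ) :
    cdf (gaussianReal m v) x = stdNormalCDF ((x - m) / Real.sqrt v) := by
  have hs : 0 < Real.sqrt v := Real.sqrt_pos.2 (by positivity)
  have hmap : (gaussianReal 0 1).map (fun y ↦ m + Real.sqrt v * y) = gaussianReal m v := by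
    rw [← Function.comp_def (fun y ↦ m + y), ← Measure.map_map (by fun_prop) (by fun_prop),
      gaussianReal_map_const_mul, gaussianReal_map_const_add]
    congr 1
    · simp
    · ext; simp
  rw [cdf_eq_real, ← hmap, map_measureReal_apply (by fun_prop) measurableSet_Iic,
    stdNormalCDF, ← measureReal_def]
  congr 1
  ext y
  simp only [Set.mem_preimage, Set.mem_Iic, le_div_iff₀ hs]
  constructor <;> intro h <;> linarith

lemma integral_cdf_add (μ ν : Measure ℝ) [IsProbabilityMeasure μ] [IsProbabilityMeasure ν]
    (c : ℝ) :
    ∫ z, cdf ν (c + z) ∂μ = cdf ((μ.prod ν).map (fun p ↦ -p.1 + p.2)) c := by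
  have hS : MeasurableSet ((fun p : ℝ × ℝ ↦ -p.1 + p.2) ⁻¹' Set.Iic c) :=
    measurableSet_Iic.preimage (by fun_prop)
  have : IsProbabilityMeasure ((μ.prod ν).map (fun p ↦ -p.1 + p.2)) :=
    Measure.isProbabilityMeasure_map (by fun_prop)
  have hslice (z : ℝ) : Prod.mk z ⁻¹' ((fun p : ℝ × ℝ ↦ -p.1 + p.2) ⁻¹' Set.Iic c)
      = Set.Iic (c + z) := by
    ext y; simp [add_comm c]
  rw [cdf_eq_real, map_measureReal_apply (by fun_prop) measurableSet_Iic, measureReal_def,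
    Measure.prod_apply hS, ← integral_toReal (measurable_measure_prodMk_left hS).aemeasurable
      (ae_of_all _ fun _ ↦ measure_lt_top _ _)]
  simp only [hslice, cdf_eq_real, measureReal_def]

lemma map_neg_add_gaussianReal (m : ℝ) (w : ℝ≥0) :
    ((gaussianReal m w).prod (gaussianReal 0 1)).map (fun p ↦ -p.1 + p.2)
      = gaussianReal (-m) (w + 1) := by
  have hfst : ((gaussianReal m w).prod (gaussianReal 0 1)).map (fun p ↦ -p.1)
      = gaussianReal (-m) w := by
    rw [← Function.comp_def (fun x : ℝ ↦ -x) Prod.fst,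
      ← Measure.map_map (by fun_prop) (by fun_prop), measurePreserving_fst.map_eq,
      gaussianReal_map_neg]
  have hsnd : ((gaussianReal m w).prod (gaussianReal 0 1)).map (fun p ↦ p.2) = gaussianReal 0 1 :=
    measurePreserving_snd.map_eq
  simpa [Pi.add_def] using gaussianReal_add_gaussianReal_of_indepFun
    (indepFun_prod (X := fun x : ℝ ↦ -x) (Y := id) measurable_neg measurable_id) hfst hsnd

lemma integral_stdNormalCDF_add_gaussianReal (c m : ℝ) (w : ℝ≥0) :
    ∫ z, stdNormalCDF (c + z) ∂gaussianReal m w = stdNormalCDF ((c + m) / Real.sqrt (1 + w)) := by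
  rw [stdNormalCDF_eq_cdf, integral_cdf_add, map_neg_add_gaussianReal,
    cdf_gaussianReal (by positivity), ← stdNormalCDF_eq_cdf]
  push_cast
  rw [sub_neg_eq_add, add_comm (w : ℝ)]

lemma map_weightedSum_pi_gaussianReal {ι : Type*} [Fintype ι] (m lam : ι → ℝ) (v : ι → ℝ≥0) :
    (Measure.pi fun i ↦ gaussianReal (m i) (v i)).map (fun x ↦ ∑ i, lam i * x i)
      = gaussianReal (∑ i, lam i * m i) (∑ i, (lam i ^ 2).toNNReal * v i) := by
  have hcomp : (fun x : ι → ℝ ↦ ∑ i, lam i * x i)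
      = (fun p ↦ ∑ i, p i) ∘ (fun x i ↦ lam i * x i) := rfl
  refine Measure.ext_of_charFun ?_
  rw [hcomp, ← Measure.map_map (by fun_prop) (by fun_prop),
    Measure.pi_map_pi (fun i ↦ by fun_prop)]
  simp only [gaussianReal_map_const_mul]
  rw [charFun_map_sum_pi_eq_prod]
  ext t
  simp only [Finset.prod_apply, charFun_gaussianReal, ← Complex.exp_sum]
  congr 1
  push_cast
  simp only [Finset.mul_sum, Finset.sum_mul, Finset.sum_div, ← Finset.sum_sub_distrib]
  refine Finset.sum_congr rfl fun i _ ↦ ?_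
  rw [Real.coe_toNNReal _ (sq_nonneg _)]
  push_cast
  ring

lemma integral_stdNormalCDF_add_weightedSum_pi_gaussianReal {ι : Type*} [Fintype ι]
    (c : ℝ) (m lam : ι → ℝ) (v : ι → ℝ≥0) :
    ∫ x, stdNormalCDF (c + ∑ i, lam i * x i) ∂Measure.pi (fun i ↦ gaussianReal (m i) (v i))
      = stdNormalCDF ((c + ∑ i, lam i * m i) / Real.sqrt (1 + ∑ i, lam i ^ 2 * v i)) := by
  have hsum : Measurable fun x : ι → ℝ ↦ ∑ i, lam i * x i := by fun_prop
  rw [← integral_map (f := fun z ↦ stdNormalCDF (c + z)) hsum.aemeasurable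
      (measurable_stdNormalCDF.comp (measurable_const_add c)).aestronglyMeasurable,
    map_weightedSum_pi_gaussianReal, integral_stdNormalCDF_add_gaussianReal]
  push_cast
  simp only [Real.coe_toNNReal _ (sq_nonneg _)]

/-- probit-Gaussian orthogonalized marginalization: with independent
Gaussian residuals εₜ ~ N(0, σₜ²) and conditional probit model
P(Y=1|Ā,X̃) = Φ(α + βᵀĀ + λᵀX̃), the g-formula yields
ψ(ā) = Φ((α + βᵀā)/√(1+σ²)) with σ² = Σₜ λₜ²σₜ². -/
theorem stmt10 {T : ℕ} (α : ℝ) (β lam : Fin T → ℝ) (σt : Fin T → ℝ≥0)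
    (ψ : (Fin T → ℝ) → ℝ)
    (hψ : ψ = fun a =>
      ∫ x, stdNormalCDF (α + ∑ t, β t * a t + ∑ t, lam t * x t)
        ∂Measure.pi (fun t => gaussianReal 0 ((σt t) ^ 2)))
    (σ2 : ℝ) (hσ2 : σ2 = ∑ t, (lam t) ^ 2 * ((σt t : ℝ)) ^ 2) :
    ∀ a, ψ a = stdNormalCDF ((α + ∑ t, β t * a t) / Real.sqrt (1 + σ2)) := by
  subst hψ hσ2
  intro a
  have h := integral_stdNormalCDF_add_weightedSum_pi_gaussianReal (α + ∑ t, β t * a t) 0 lam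
    (fun t ↦ σt t ^ 2)
  push_cast at h
  simpa using h
end

section
/- (Cox orthogonalized marginalization) Suppose Xₜ = gₜ(āₜ₋₁, X̄ₜ₋₁) + εₜ with εₜ ~ N(0, σₜ²) independent, and the conditional survival function is P(Y ≥ t | Ā, X̄) = exp(−H₀(t) exp(βᵀĀ + λᵀX̃)) where X̃ₜ = Xₜ − gₜ and H₀ is a nonnegative nondecreasing function. Then the g-formula gives ψ(ā, t) = ∫ exp(−H₀(t) exp(βᵀā + z)) φ_{σ²}(z) dz, where φ_{σ²} is the N(0, σ²) density and σ² = Σₜ λₜ² σₜ². That is, the marginal survival curve is a Gaussian-frailty Cox model with the same coefficients β as the conditional model. -/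
open MeasureTheory ProbabilityTheory
open scoped NNReal

/-!
After the change of variables to the residuals, the g-formula integrand depends on
ε = (ε₁, …, ε_T) only through the linear statistic Σₜ λₜ εₜ. Under independent
N(0, σₜ²) residuals this statistic is N(0, Σₜ λₜ² σₜ²), as one sees by multiplying
characteristic functions, so the integral transports to an integral against that law.
-/

namespace ProbabilityTheory

variable {ι : Type*} [Fintype ι]

lemma map_pi_gaussianReal_sum (m : ι → ℝ) (v : ι → ℝ≥0) :
    (Measure.pi fun i ↦ gaussianReal (m i) (v i)).map (fun x ↦ ∑ i, x i)
      = gaussianReal (∑ i, m i) (∑ i, v i) := by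
  refine Measure.ext_of_charFun (funext fun t ↦ ?_)
  rw [charFun_map_sum_pi_eq_prod, Finset.prod_apply]
  simp only [charFun_gaussianReal, ← Complex.exp_sum]
  push_cast
  congr 1
  simp only [Finset.mul_sum, Finset.sum_mul, Finset.sum_div, ← Finset.sum_sub_distrib]

lemma map_pi_gaussianReal_linear (c m : ι → ℝ) (v : ι → ℝ≥0) :
    (Measure.pi fun i ↦ gaussianReal (m i) (v i)).map (fun x ↦ ∑ i, c i * x i)
      = gaussianReal (∑ i, c i * m i) (∑ i, .mk (c i ^ 2) (sq_nonneg _) * v i) := by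
  have hscale : (Measure.pi fun i ↦ gaussianReal (m i) (v i)).map (fun x i ↦ c i * x i)
      = Measure.pi fun i ↦ gaussianReal (c i * m i) (.mk (c i ^ 2) (sq_nonneg _) * v i) := by
    rw [Measure.pi_map_pi fun i ↦ (measurable_const_mul (c i)).aemeasurable]
    simp only [gaussianReal_map_const_mul]
  rw [← map_pi_gaussianReal_sum, ← hscale, Measure.map_map (by fun_prop) (by fun_prop)]
  rfl

end ProbabilityTheory

theorem stmt11_general {T : ℕ} (β lam : Fin T → ℝ) (σt : Fin T → ℝ≥0)
    (H0 : ℝ → ℝ)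
    (σ2 : ℝ≥0) (hσ2 : (σ2 : ℝ) = ∑ t, (lam t) ^ 2 * ((σt t : ℝ)) ^ 2)
    (ψ : (Fin T → ℝ) → ℝ → ℝ)
    (hψ : ψ = fun a t =>
      ∫ x, Real.exp (-(H0 t) * Real.exp (∑ s, β s * a s + ∑ s, lam s * x s))
        ∂Measure.pi (fun s => gaussianReal 0 ((σt s) ^ 2))) :
    ∀ a t, ψ a t
      = ∫ z, Real.exp (-(H0 t) * Real.exp (∑ s, β s * a s + z)) ∂gaussianReal 0 σ2 := by
  intro a t
  have hlaw : (Measure.pi fun s ↦ gaussianReal 0 (σt s ^ 2)).map (fun x ↦ ∑ s, lam s * x s)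
      = gaussianReal 0 σ2 := by
    rw [map_pi_gaussianReal_linear]
    congr 1
    · simp
    · ext
      push_cast [hσ2]
      rfl
  rw [hψ, ← hlaw, integral_map (Measurable.aemeasurable (by fun_prop)) (by fun_prop)]

/-- Cox orthogonalized marginalization: with independent Gaussian
residuals εₜ ~ N(0, σₜ²) and conditional survival function
P(Y ≥ t | Ā, X̄) = exp(−H₀(t)exp(βᵀĀ + λᵀX̃)), the g-formula gives
ψ(ā,t) = ∫ exp(−H₀(t)exp(βᵀā + z)) dN(0,σ²)(z) with σ² = Σₜ λₜ²σₜ²: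
a Gaussian-frailty Cox model with the same coefficients β. -/
theorem stmt11 {T : ℕ} (β lam : Fin T → ℝ) (σt : Fin T → ℝ≥0)
    (H0 : ℝ → ℝ) (hH0nonneg : ∀ t, 0 ≤ H0 t) (hH0mono : Monotone H0)
    (σ2 : ℝ≥0) (hσ2 : (σ2 : ℝ) = ∑ t, (lam t) ^ 2 * ((σt t : ℝ)) ^ 2)
    (ψ : (Fin T → ℝ) → ℝ → ℝ)
    (hψ : ψ = fun a t =>
      ∫ x, Real.exp (-(H0 t) * Real.exp (∑ s, β s * a s + ∑ s, lam s * x s))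
        ∂Measure.pi (fun s => gaussianReal 0 ((σt s) ^ 2))) :
    ∀ a t, ψ a t
      = ∫ z, Real.exp (-(H0 t) * Real.exp (∑ s, β s * a s + z)) ∂gaussianReal 0 σ2 :=
  stmt11_general β lam σt H0 σ2 hσ2 ψ hψ
end

section
/- Suppose ψ(ā, t) = ∫ exp(−H₀(t)·exp(θᵀā + z)) φ_{σ²}(z) dz with H₀ nonnegative and nondecreasing, σ² > 0, and H₀ not identically zero with H₀(t) → ∞. Then for each t with 0 < H₀(t) < ∞, ā ↦ ψ(ā, t) is constant in ā if and only if θ = 0 (assuming ā ranges over all of ℝ^T). -/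
open MeasureTheory ProbabilityTheory
open scoped NNReal

/-! For `H > 0` the map `u ↦ ∫ exp (-H * exp (u + z)) dμ(z)` is strictly decreasing, hence
injective, for any nonzero finite measure `μ`. If `ā ↦ ψ(ā, t)` is constant, comparing `ā = θ`
with `ā = 0` therefore gives `∑ θₛ² = 0`. -/

lemma integral_lt_integral_of_forall_lt {α : Type*} [MeasurableSpace α] {μ : Measure α}
    [NeZero μ] {f g : α → ℝ} (hf : Integrable f μ) (hg : Integrable g μ)
    (hfg : ∀ x, f x < g x) : ∫ x, f x ∂μ < ∫ x, g x ∂μ := by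
  refine (integral_mono hf hg fun x ↦ (hfg x).le).lt_of_ne fun h ↦ ?_
  obtain ⟨x, hx⟩ := ((integral_eq_iff_of_ae_le hf hg (ae_of_all _ fun x ↦ (hfg x).le)).1 h).exists
  exact (hfg x).ne hx

lemma integrable_exp_neg_mul_exp_add {μ : Measure ℝ} [IsFiniteMeasure μ] {H : ℝ} (hH : 0 ≤ H)
    (u : ℝ) : Integrable (fun z ↦ Real.exp (-H * Real.exp (u + z))) μ := by
  refine Integrable.mono' (integrable_const 1) (by fun_prop) (ae_of_all _ fun z ↦ ?_)
  rw [Real.norm_of_nonneg (Real.exp_pos _).le, Real.exp_le_one_iff, neg_mul, neg_nonpos]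
  positivity

lemma strictAnti_integral_exp_neg_mul_exp_add {μ : Measure ℝ} [IsFiniteMeasure μ] [NeZero μ]
    {H : ℝ} (hH : 0 < H) : StrictAnti fun u ↦ ∫ z, Real.exp (-H * Real.exp (u + z)) ∂μ := by
  intro u v huv
  refine integral_lt_integral_of_forall_lt (integrable_exp_neg_mul_exp_add hH.le v)
    (integrable_exp_neg_mul_exp_add hH.le u) fun z ↦ ?_
  simp only [neg_mul]
  gcongr

theorem stmt16_general {T : ℕ} (θ : Fin T → ℝ) (H0 : ℝ → ℝ)
    (σ2 : ℝ≥0)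
    (ψ : (Fin T → ℝ) → ℝ → ℝ)
    (hψ : ψ = fun a t =>
      ∫ z, Real.exp (-(H0 t) * Real.exp (∑ s, θ s * a s + z)) ∂gaussianReal 0 σ2) :
    ∀ t, 0 < H0 t → ((∀ a b : Fin T → ℝ, ψ a t = ψ b t) ↔ θ = 0) := by
  intro t ht
  subst hψ
  constructor
  · intro hconst
    have hsum : ∑ s, θ s * θ s = ∑ s, θ s * (0 : Fin T → ℝ) s :=
      (strictAnti_integral_exp_neg_mul_exp_add ht).injective (hconst θ 0)
    simp only [Pi.zero_apply, mul_zero, Finset.sum_const_zero,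
      Finset.sum_mul_self_eq_zero_iff] at hsum
    exact funext fun s ↦ hsum s (Finset.mem_univ s)
  · rintro rfl a b
    simp

/-- for the Gaussian-frailty Cox marginal survival curve
ψ(ā,t) = ∫ exp(−H₀(t)exp(θᵀā + z)) dN(0,σ²)(z), with H₀ nonnegative, nondecreasing,
tending to ∞, and σ² > 0, for each t with 0 < H₀(t) (< ∞ automatic for real-valued
H₀), the map ā ↦ ψ(ā,t) over all of ℝ^T is constant iff θ = 0. -/
theorem stmt16 {T : ℕ} (θ : Fin T → ℝ) (H0 : ℝ → ℝ)
    (hH0nonneg : ∀ t, 0 ≤ H0 t) (hH0mono : Monotone H0)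
    (htend : Filter.Tendsto H0 Filter.atTop Filter.atTop)
    (σ2 : ℝ≥0) (hσ2 : 0 < σ2)
    (ψ : (Fin T → ℝ) → ℝ → ℝ)
    (hψ : ψ = fun a t =>
      ∫ z, Real.exp (-(H0 t) * Real.exp (∑ s, θ s * a s + z)) ∂gaussianReal 0 σ2) :
    ∀ t, 0 < H0 t → ((∀ a b : Fin T → ℝ, ψ a t = ψ b t) ↔ θ = 0) :=
  stmt16_general θ H0 σ2 ψ hψ
end

section
/- Under the three identification conditions (no interference, positivity, and sequential no-unmeasured-confounding) in a discrete two-period setting, the counterfactual mean E[Y^{a₁,a₂}] equals the g-formula: Σ_{x₂} E[Y | A₁=a₁, X₂=x₂, A₂=a₂] P(X₂=x₂ | A₁=a₁). -/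
/-!
Independence of `Y^{a₁,a₂}` from `A₁` gives `E[Y^{a₁,a₂}] = E[Y^{a₁,a₂}; A₁ = a₁] / P(A₁ = a₁)`.
Splitting `{A₁ = a₁}` along the finitely many values of `X₂`, stage-2 ignorability turns the
integral over each stratum into the stratum's probability times the mean of `Y^{a₁,a₂}` on the
sub-stratum `{A₂ = a₂}`, where consistency replaces `Y^{a₁,a₂}` by the observed `Y`.
Null strata contribute `0` to both sides, whatever the junk value of the conditional mean.
-/

open MeasureTheory ProbabilityTheory

section

variable {Ω : Type*} [MeasurableSpace Ω] {μ : Measure Ω}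

lemma setIntegral_preimage_eq_measureReal_mul_of_indepFun {β : Type*} [MeasurableSpace β]
    {f : Ω → ℝ} {g : Ω → β} {t : Set β} (hfg : IndepFun f g μ) (hf : AEMeasurable f μ)
    (hg : Measurable g) (ht : MeasurableSet t) :
    ∫ ω in g ⁻¹' t, f ω ∂μ = μ.real (g ⁻¹' t) * ∫ ω, f ω ∂μ :=
  ((IndepFun_iff_Indep f g μ).1 hfg).symm.setIntegral_eq_mul (f := id) hg.comap_le hf
    ⟨t, ht, rfl⟩ aestronglyMeasurable_id

lemma sum_setIntegral_inter_preimage_singleton {S : Type*} [Fintype S] [MeasurableSpace S]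
    [MeasurableSingletonClass S] {f : Ω → ℝ} {X : Ω → S} {s : Set Ω} (hX : Measurable X)
    (hs : MeasurableSet s) (hf : IntegrableOn f s μ) :
    ∑ x, ∫ ω in s ∩ X ⁻¹' {x}, f ω ∂μ = ∫ ω in s, f ω ∂μ := by
  rw [← integral_iUnion_fintype (fun x ↦ hs.inter (hX (measurableSet_singleton x)))
    (fun x y hxy ↦ (pairwise_disjoint_fiber X hxy).mono inf_le_right inf_le_right)
    (fun x ↦ hf.mono_set Set.inter_subset_left), ← Set.inter_iUnion,
    ← Set.preimage_iUnion, Set.iUnion_of_singleton, Set.preimage_univ, Set.inter_univ]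

lemma setIntegral_div_measureReal_mul_eq_of_mul_eq [IsFiniteMeasure μ] {f : Ω → ℝ}
    {s t : Set Ω} (h : (∫ ω in t, f ω ∂μ) * μ.real s = (∫ ω in s, f ω ∂μ) * μ.real t)
    (hpos : 0 < μ s → 0 < μ t) :
    (∫ ω in t, f ω ∂μ) / μ.real t * μ.real s = ∫ ω in s, f ω ∂μ := by
  rcases (zero_le : 0 ≤ μ s).eq_or_lt with hs | hs
  · simp [Measure.real, ← hs, Measure.restrict_eq_zero.2 hs.symm]
  · have ht : μ.real t ≠ 0 := (measureReal_ne_zero_iff).2 (hpos hs).ne'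
    rw [div_mul_eq_mul_div, h, mul_div_cancel_right₀ _ ht]

end

theorem stmt19_general {Ω : Type*} [MeasurableSpace Ω] (μ : Measure Ω) [IsProbabilityMeasure μ]
    {α : Type*} [MeasurableSpace α] [MeasurableSingletonClass α]
    {S : Type*} [Fintype S] [MeasurableSpace S] [MeasurableSingletonClass S]
    (A1 A2 : Ω → α) (X2 : Ω → S) (Y Ypo : Ω → ℝ)
    (hA1 : Measurable A1) (hA2 : Measurable A2) (hX2 : Measurable X2)
    (hYpoInt : Integrable Ypo μ)
    (a1 a2 : α)
    -- (1) consistency / no interference: Y = Y^{a₁,a₂} on {A₁=a₁, A₂=a₂}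
    (hcons : ∀ ω, A1 ω = a1 → A2 ω = a2 → Y ω = Ypo ω)
    -- (2) positivity
    (hpos1 : 0 < μ {ω | A1 ω = a1})
    (hpos2 : ∀ x2, 0 < μ {ω | A1 ω = a1 ∧ X2 ω = x2} →
      0 < μ {ω | A1 ω = a1 ∧ X2 ω = x2 ∧ A2 ω = a2})
    -- (3a) sequential ignorability, stage 1: Y^{a₁,a₂} ⫫ A₁
    (hig1 : IndepFun Ypo A1 μ)
    -- (3b) sequential ignorability, stage 2: Y^{a₁,a₂} ⫫ A₂ given (A₁, X₂),
    -- expressed at the conditioning values (a₁, x₂):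
    (hig2 : ∀ x2,
      (∫ ω in {ω | A1 ω = a1 ∧ X2 ω = x2 ∧ A2 ω = a2}, Ypo ω ∂μ) *
          (μ {ω | A1 ω = a1 ∧ X2 ω = x2}).toReal =
      (∫ ω in {ω | A1 ω = a1 ∧ X2 ω = x2}, Ypo ω ∂μ) *
          (μ {ω | A1 ω = a1 ∧ X2 ω = x2 ∧ A2 ω = a2}).toReal) :
    ∫ ω, Ypo ω ∂μ =
      ∑ x2 : S,
        ((∫ ω in {ω | A1 ω = a1 ∧ X2 ω = x2 ∧ A2 ω = a2}, Y ω ∂μ) /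
            (μ {ω | A1 ω = a1 ∧ X2 ω = x2 ∧ A2 ω = a2}).toReal) *
          ((μ {ω | A1 ω = a1 ∧ X2 ω = x2}).toReal / (μ {ω | A1 ω = a1}).toReal) := by
  have hS1 : MeasurableSet (A1 ⁻¹' {a1}) := hA1 (measurableSet_singleton a1)
  have hS1_ne : μ.real (A1 ⁻¹' {a1}) ≠ 0 := (measureReal_ne_zero_iff).2 hpos1.ne'
  calc ∫ ω, Ypo ω ∂μ = (∫ ω in A1 ⁻¹' {a1}, Ypo ω ∂μ) / μ.real (A1 ⁻¹' {a1}) := by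
        rw [setIntegral_preimage_eq_measureReal_mul_of_indepFun hig1 hYpoInt.aemeasurable hA1
          (measurableSet_singleton a1), mul_div_cancel_left₀ _ hS1_ne]
    _ = (∑ x2, ∫ ω in A1 ⁻¹' {a1} ∩ X2 ⁻¹' {x2}, Ypo ω ∂μ) / μ.real (A1 ⁻¹' {a1}) := by
        rw [sum_setIntegral_inter_preimage_singleton hX2 hS1 hYpoInt.integrableOn]
    _ = _ := by
        rw [Finset.sum_div]
        refine Finset.sum_congr rfl fun x2 _ ↦ ?_
        have hS3 : MeasurableSet {ω | A1 ω = a1 ∧ X2 ω = x2 ∧ A2 ω = a2} :=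
          hS1.inter ((hX2 (measurableSet_singleton x2)).inter (hA2 (measurableSet_singleton a2)))
        rw [setIntegral_congr_fun hS3 fun ω hω ↦ hcons ω hω.1 hω.2.2, ← mul_div_assoc]
        -- preimage strata vs. set-builder strata: equal up to defeq only, so no `rw`
        exact congrArg (· / _)
          (setIntegral_div_measureReal_mul_eq_of_mul_eq (hig2 x2) (hpos2 x2)).symm

/-- g-formula identification, discrete two-period case: under
consistency/no interference, positivity, and sequential no-unmeasured-confounding,
the counterfactual mean E[Y^{a₁,a₂}] equals the g-formula
Σ_{x₂} E[Y | A₁=a₁, X₂=x₂, A₂=a₂] · P(X₂=x₂ | A₁=a₁). -/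
theorem stmt19 {Ω : Type*} [MeasurableSpace Ω] (μ : Measure Ω) [IsProbabilityMeasure μ]
    {α : Type*} [MeasurableSpace α] [MeasurableSingletonClass α]
    {S : Type*} [Fintype S] [MeasurableSpace S] [MeasurableSingletonClass S]
    (A1 A2 : Ω → α) (X2 : Ω → S) (Y Ypo : Ω → ℝ)
    (hA1 : Measurable A1) (hA2 : Measurable A2) (hX2 : Measurable X2)
    (hYpoM : Measurable Ypo) (hYpoInt : Integrable Ypo μ) (hYInt : Integrable Y μ)
    (a1 a2 : α)
    -- (1) consistency / no interference: Y = Y^{a₁,a₂} on {A₁=a₁, A₂=a₂}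
    (hcons : ∀ ω, A1 ω = a1 → A2 ω = a2 → Y ω = Ypo ω)
    -- (2) positivity
    (hpos1 : 0 < μ {ω | A1 ω = a1})
    (hpos2 : ∀ x2, 0 < μ {ω | A1 ω = a1 ∧ X2 ω = x2} →
      0 < μ {ω | A1 ω = a1 ∧ X2 ω = x2 ∧ A2 ω = a2})
    -- (3a) sequential ignorability, stage 1: Y^{a₁,a₂} ⫫ A₁
    (hig1 : IndepFun Ypo A1 μ)
    -- (3b) sequential ignorability, stage 2: Y^{a₁,a₂} ⫫ A₂ given (A₁, X₂),
    -- expressed at the conditioning values (a₁, x₂):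
    (hig2 : ∀ x2,
      (∫ ω in {ω | A1 ω = a1 ∧ X2 ω = x2 ∧ A2 ω = a2}, Ypo ω ∂μ) *
          (μ {ω | A1 ω = a1 ∧ X2 ω = x2}).toReal =
      (∫ ω in {ω | A1 ω = a1 ∧ X2 ω = x2}, Ypo ω ∂μ) *
          (μ {ω | A1 ω = a1 ∧ X2 ω = x2 ∧ A2 ω = a2}).toReal) :
    ∫ ω, Ypo ω ∂μ =
      ∑ x2 : S,
        ((∫ ω in {ω | A1 ω = a1 ∧ X2 ω = x2 ∧ A2 ω = a2}, Y ω ∂μ) /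
            (μ {ω | A1 ω = a1 ∧ X2 ω = x2 ∧ A2 ω = a2}).toReal) *
          ((μ {ω | A1 ω = a1 ∧ X2 ω = x2}).toReal / (μ {ω | A1 ω = a1}).toReal) :=
  stmt19_general μ A1 A2 X2 Y Ypo hA1 hA2 hX2 hYpoInt a1 a2 hcons hpos1 hpos2 hig1 hig2
end
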